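/- arXiv:1308.2421 — 2 statements merged into one kernel-verified Lean document; each statement's English description precedes it below -/
import Mathlib

section
/- For the generic Grassmann matrix X = Σ_{i,j} x_{ij} e_{ij} ∈ M_n(E), the traces of all even powers vanish: tr(X^{2i}) = 0 for all i ≥ 1. -/
/-!
A generator `ι v` of the exterior algebra supercommutes with every element of degree `m`:
`ι v * a = (-1) ^ m * a * ι v`. The entries of `X` are generators and the entries of `X ^ (2i-1)`
have odd degree, so each term of `tr (X * X ^ (2i-1)) = ∑ X_kl (X ^ (2i-1))_lk` changes sign when its
factors are swapped. Hence `tr (X ^ 2i) = -tr (X ^ (2i-1) * X) = -tr (X ^ 2i)`, and `2` is invertible.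
-/

/-- The generic Grassmann matrix over the exterior algebra on `n²` generators. -/
noncomputable def grassX (F : Type*) [Field F] (n : ℕ) :
    Matrix (Fin n) (Fin n) (ExteriorAlgebra F (Fin n × Fin n → F)) :=
  fun i j => ExteriorAlgebra.ι F (Pi.single (i, j) (1 : F))

namespace ExteriorAlgebra

variable {R M : Type*} [CommRing R] [AddCommGroup M] [Module R M]

theorem ι_mul_eq_neg_one_pow_mul_mul_ι (v : M) {m : ℕ} {a : ExteriorAlgebra R M}
    (ha : a ∈ ⋀[R]^m M) : ι R v * a = (-1) ^ m * (a * ι R v) := by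
  induction ha using Submodule.pow_induction_on_left' with
  | algebraMap r => simp [Algebra.commutes]
  | add x y i _ _ hx hy => rw [mul_add, hx, hy, add_mul, mul_add]
  | mem_mul w hw i x _ hx =>
    obtain ⟨w, rfl⟩ := hw
    have hswap : ι R v * ι R w = -(ι R w * ι R v) :=
      eq_neg_of_add_eq_zero_left (ι_add_mul_swap v w)
    have hcomm : Commute ((-1 : ExteriorAlgebra R M) ^ i) (ι R w) :=
      (Commute.neg_one_left _).pow_left i
    calc ι R v * (ι R w * x) = -(ι R w * (ι R v * x)) := by
          rw [← mul_assoc, hswap, neg_mul, mul_assoc]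
      _ = (-1) ^ (i + 1) * (ι R w * x * ι R v) := by
          rw [hx, ← mul_assoc, ← hcomm.eq]
          simp [pow_succ, mul_assoc]

end ExteriorAlgebra

namespace Matrix

variable {n : Type*} [Fintype n]

theorem pow_apply_mem_pow [DecidableEq n] {R A : Type*} [CommSemiring R] [Semiring A]
    [Algebra R A] {S : Submodule R A} {X : Matrix n n A} (hX : ∀ i j, X i j ∈ S)
    (m : ℕ) (i j : n) : (X ^ m) i j ∈ S ^ m := by
  induction m generalizing j with
  | zero =>
    rw [pow_zero, pow_zero, one_apply]
    split_ifs
    · exact Submodule.one_le.mp le_rfl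
    · exact zero_mem _
  | succ m ih =>
    rw [pow_succ, pow_succ, mul_apply]
    exact Submodule.sum_mem _ fun k _ => Submodule.mul_mem_mul (ih k) (hX k j)

theorem trace_mul_eq_neg_trace_mul {R : Type*} [Ring R] {A B : Matrix n n R}
    (h : ∀ i j, A i j * B j i = -(B j i * A i j)) : (A * B).trace = -(B * A).trace := by
  simp only [trace, diag, mul_apply, h, Finset.sum_neg_distrib]
  rw [Finset.sum_comm]

end Matrix

theorem grassX_apply_mem_range_ι (F : Type*) [Field F] (n : ℕ) (k l : Fin n) :
    grassX F n k l ∈ LinearMap.range (ExteriorAlgebra.ι F (M := Fin n × Fin n → F)) :=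
  LinearMap.mem_range_self _ _

/-- The traces of all even powers of the generic Grassmann matrix vanish. -/
theorem trace_grassX_even_pow (F : Type*) [Field F] [CharZero F] (n : ℕ)
    (i : ℕ) (hi : 1 ≤ i) :
    Matrix.trace (grassX F n ^ (2 * i)) = 0 := by
  set X := grassX F n
  obtain ⟨m, hm⟩ : ∃ m, 2 * i = m + 1 := ⟨2 * i - 1, by omega⟩
  have hodd : Odd m := ⟨i - 1, by omega⟩
  have hanti : ∀ k l, X k l * (X ^ m) l k = -((X ^ m) l k * X k l) := fun k l => by
    have hdeg := Matrix.pow_apply_mem_pow (grassX_apply_mem_range_ι F n) m l k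
    rw [← neg_one_mul, ← hodd.neg_one_pow]
    exact ExteriorAlgebra.ι_mul_eq_neg_one_pow_mul_mul_ι _ hdeg
  have hneg : (X ^ (2 * i)).trace = -(X ^ (2 * i)).trace :=
    calc (X ^ (2 * i)).trace = (X * X ^ m).trace := by rw [hm, pow_succ']
      _ = -(X ^ m * X).trace := Matrix.trace_mul_eq_neg_trace_mul hanti
      _ = -(X ^ (2 * i)).trace := by rw [hm, pow_succ]
  have htwo : (2 : F) • (X ^ (2 * i)).trace = 0 := by
    rw [two_smul, ← eq_neg_iff_add_eq_zero.mp hneg]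
  exact (smul_eq_zero.mp htwo).resolve_left two_ne_zero
end

section
/- The standard polynomial S_k does not vanish identically on M_n for k < 2n: there exist matrices A_1,…,A_{2n-1} ∈ M_n(Q) (a suitable sequence of matrix units E_{11}, E_{12}, E_{22}, E_{23}, …) with S_{2n-1}(A_1,…,A_{2n-1}) ≠ 0; hence 2n is the minimal degree of a standard identity for M_n. -/
open Equiv

/-- The standard polynomial `S_k`. -/
def stdPoly {R : Type*} [Ring R] (h : ℕ) (v : Fin h → R) : R :=
  ∑ σ : Perm (Fin h), (Perm.sign σ : ℤ) • (List.ofFn (fun i => v (σ i))).prod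

/-!
A product of matrix units `E_{a₁b₁} ⋯ E_{a_kb_k}` is `E_{a₁b_k}` when `bᵢ = aᵢ₊₁` for every `i`,
and `0` otherwise. In the staircase `E₁₁, E₁₂, E₂₂, …, E_nn` the `j`-th unit (from `0`) has
row + column `= j` and row `≤` column, so along any reordering whose product is nonzero the
position `j` can only increase: the only such reordering is the identity. Hence
`S_{2n-1}` evaluates to the single term `E_{1n} ≠ 0`.
-/

namespace Matrix

variable {ι R : Type*} [DecidableEq ι]

theorem single_ne_zero [Zero R] (i j : ι) {c : R} (hc : c ≠ 0) : single i j c ≠ 0 :=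
  fun h => hc <| by simpa using congrFun₂ h i j

variable [Fintype ι] [Semiring R]

theorem prod_map_single_one_of_isChain :
    ∀ (l : List (ι × ι)) (hl : l ≠ []), l.IsChain (fun a b => a.2 = b.1) →
      (l.map fun p => single p.1 p.2 (1 : R)).prod = single (l.head hl).1 (l.getLast hl).2 1
  | [p], _, _ => by simp
  | p :: q :: l, _, h => by
    obtain ⟨hpq, hl⟩ := List.isChain_cons_cons.mp h
    rw [List.map_cons, List.prod_cons, prod_map_single_one_of_isChain (q :: l) (by simp) hl,
      List.head_cons, List.head_cons, ← hpq, single_mul_single_same, mul_one,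
      List.getLast_cons_cons]

theorem prod_map_single_one_eq_zero_of_not_isChain :
    ∀ (l : List (ι × ι)), ¬ l.IsChain (fun a b => a.2 = b.1) →
      (l.map fun p => single p.1 p.2 (1 : R)).prod = 0
  | [], h | [_], h => absurd (by simp) h
  | p :: q :: l, h => by
    rw [List.map_cons, List.prod_cons]
    rcases not_and_or.mp (List.isChain_cons_cons.not.mp h) with hpq | hl
    · rw [List.map_cons, List.prod_cons, ← mul_assoc, single_mul_single_of_ne (h := hpq), zero_mul]
    · rw [prod_map_single_one_eq_zero_of_not_isChain _ hl, mul_zero]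

end Matrix

theorem Equiv.Perm.eq_one_of_monotone {α : Type*} [LinearOrder α] [Finite α] {σ : Perm α}
    (h : Monotone σ) : σ = 1 :=
  Equiv.ext <| congrFun (h.strictMono_of_injective σ.injective).eq_id

-- The index pairs of `E₁₁, E₁₂, E₂₂, …, E_nn`, counted from `0`.
def staircase (n : ℕ) (j : Fin (2 * n - 1)) : Fin n × Fin n :=
  (⟨j / 2, by omega⟩, ⟨(j + 1) / 2, by omega⟩)

theorem staircase_le_of_snd_eq_fst {n : ℕ} {i j : Fin (2 * n - 1)}
    (h : (staircase n i).2 = (staircase n j).1) : i ≤ j := by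
  simp only [staircase, Fin.mk.injEq] at h
  rw [Fin.le_iff_val_le_val]
  omega

theorem isChain_staircase (n : ℕ) :
    (List.ofFn (staircase n)).IsChain (fun a b => a.2 = b.1) :=
  List.isChain_ofFn.mpr fun _ _ => rfl

theorem eq_one_of_isChain_staircase {n : ℕ} (σ : Perm (Fin (2 * n - 1)))
    (h : (List.ofFn (staircase n ∘ σ)).IsChain (fun a b => a.2 = b.1)) : σ = 1 :=
  Perm.eq_one_of_monotone <| List.sortedLE_ofFn_iff.mp <| List.sortedLE_iff_isChain.mpr <|
    List.isChain_of_isChain_map _ (fun _ _ => staircase_le_of_snd_eq_fst) (List.map_ofFn ▸ h)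

/-- The standard polynomial `S_{2n-1}` does not vanish identically on `M_n(ℚ)`: there is a
sequence of `2n-1` matrix units (the staircase `E₁₁, E₁₂, E₂₂, E₂₃, …`) on which it is
nonzero. Hence `2n` is the minimal degree of a standard identity for `M_n`. -/
theorem stdPoly_not_identity_below_two_n (n : ℕ) (hn : 1 ≤ n) :
    ∃ idx : Fin (2 * n - 1) → Fin n × Fin n,
      stdPoly (2 * n - 1)
        (fun i => Matrix.single (idx i).1 (idx i).2 (1 : ℚ)) ≠ 0 := by
  refine ⟨staircase n, ?_⟩
  have hterm (σ : Perm (Fin (2 * n - 1))) :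
      (List.ofFn fun i => Matrix.single (staircase n (σ i)).1 (staircase n (σ i)).2 (1 : ℚ)) =
        (List.ofFn (staircase n ∘ σ)).map fun p => Matrix.single p.1 p.2 1 := by
    rw [List.map_ofFn]; rfl
  have hne : List.ofFn (staircase n) ≠ [] := mt List.ofFn_eq_nil_iff.1 (by omega)
  rw [stdPoly, Finset.sum_eq_single_of_mem 1 (Finset.mem_univ _) fun σ _ hσ => by
    rw [hterm, Matrix.prod_map_single_one_eq_zero_of_not_isChain _
      (mt (eq_one_of_isChain_staircase σ) hσ), smul_zero]]
  rw [Perm.sign_one, Units.val_one, one_smul, hterm, Perm.coe_one, Function.comp_id,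
    Matrix.prod_map_single_one_of_isChain _ hne (isChain_staircase n)]
  exact Matrix.single_ne_zero _ _ one_ne_zero
end
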